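/- Let G be a connected finite graph and ω a 1-form on G. Then L(u,χ_ω) = z(u) (the Ihara zeta function) if and only if χ_ω(C) = 1 for every circuit C on G, which holds if and only if the character χ_ω restricted to H₁(G,ℤ) is trivial. -/

import Mathlib

/-- A finite (multi)graph, given by its set of vertices and its set of darts
(oriented edges): each unoriented edge corresponds to a pair `{d, inv d}` of darts. -/
structure Multigraph where
  V : Type
  D : Type
  fintypeV : Fintype V
  fintypeD : Fintype D
  decEqV : DecidableEq V
  decEqD : DecidableEq D
  inv : D → D
  inv_inv : ∀ d, inv (inv d) = d
  inv_ne : ∀ d, inv d ≠ d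
  head : D → V

instance (G : Multigraph) : Fintype G.V := G.fintypeV
instance (G : Multigraph) : Fintype G.D := G.fintypeD
instance (G : Multigraph) : DecidableEq G.V := G.decEqV
instance (G : Multigraph) : DecidableEq G.D := G.decEqD

namespace Multigraph

variable (G : Multigraph)

/-- The initial vertex `d(0)` of an oriented edge. -/
def tail (d : G.D) : G.V := G.head (G.inv d)

/-- Two vertices are adjacent if some oriented edge goes from one to the other. -/
def Adj (v w : G.V) : Prop := ∃ d : G.D, G.tail d = v ∧ G.head d = w

/-- The graph is connected. -/
def Connected : Prop := Nonempty G.V ∧ ∀ v w : G.V, Relation.ReflTransGen G.Adj v w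

/-- `ω` is a 1-form: it changes sign under reversal of orientation. -/
def IsOneForm (ω : G.D → ℝ) : Prop := ∀ d, ω (G.inv d) = - ω d

end Multigraph

namespace Multigraph

/-- A circuit: a closed walk without backtracks or tail, recorded as its
(nonempty) list of darts. -/
structure Circuit (G : Multigraph) where
  darts : List G.D
  ne : darts ≠ []
  chain : List.Chain' (fun a b => G.tail b = G.head a ∧ b ≠ G.inv a) darts
  closed : G.tail (darts.head ne) = G.head (darts.getLast ne)
  notail : darts.head ne ≠ G.inv (darts.getLast ne)

/-- The length `τ(C)` of a circuit. -/
def Circuit.len {G : Multigraph} (C : G.Circuit) : ℕ := C.darts.length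

/-- `χ_ω(C) = e^{2πi ω(C^{ab})}`, the character value of a circuit. -/
noncomputable def chiC (G : Multigraph) (ω : G.D → ℝ) (C : G.Circuit) : ℂ :=
  Complex.exp (2 * Real.pi * Complex.I * ((C.darts.map ω).sum : ℝ))

/-- A circuit is prime if it is not a proper power `D^k`, `k ≥ 2`, of a shorter
closed walk. -/
def Circuit.IsPrime {G : Multigraph} (C : G.Circuit) : Prop :=
  ¬ ∃ (l : List G.D) (k : ℕ), 2 ≤ k ∧ C.darts = (List.replicate k l).flatten

/-- Two circuits are equivalent (determine the same cycle) iff they differ by a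
rotation, i.e. by the choice of initial vertex. -/
def rotRel {G : Multigraph} (C C' : G.Circuit) : Prop :=
  ∃ n : ℕ, C'.darts = C.darts.rotate n

/-- Cycles: equivalence classes of circuits up to choice of initial vertex. -/
def Cyc (G : Multigraph) : Type := Quot (@rotRel G)

/-- A representative circuit of a cycle. -/
noncomputable def Cyc.out {G : Multigraph} (q : G.Cyc) : G.Circuit := Quot.out q

/-- The length `τ` of a cycle. -/
noncomputable def tauQ {G : Multigraph} (q : G.Cyc) : ℕ := q.out.len

/-- The character value `χ_ω` of a cycle. -/
noncomputable def chiQ {G : Multigraph} (ω : G.D → ℝ) (q : G.Cyc) : ℂ :=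
  chiC G ω q.out

/-- A cycle is prime if its circuits are prime. -/
def primeQ {G : Multigraph} (q : G.Cyc) : Prop := q.out.IsPrime

/-- The (primitive) period of a circuit: the least positive `k` with
`C.darts.rotate k = C.darts`. -/
def Circuit.period {G : Multigraph} (C : G.Circuit) : ℕ :=
  Nat.find (⟨C.darts.length,
    List.length_pos_iff.mpr C.ne, List.rotate_length C.darts⟩ :
    ∃ k, 0 < k ∧ C.darts.rotate k = C.darts)

/-- `r(C)`: the exponent in the prime decomposition `C = P^{r(C)}`. -/
noncomputable def rQ {G : Multigraph} (q : G.Cyc) : ℕ :=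
  q.out.len / q.out.period

end Multigraph

namespace Multigraph

/-- The L-function `L(u, χ_ω) = ∏_{[P]} (1 - χ_ω(P) u^{τ(P)})⁻¹` (product over all
prime cycles `[P]`) as a formal power series: its `l`-th coefficient equals the
`l`-th coefficient of the (finite) product over primes of length `≤ l`, since the
remaining factors only affect higher-order coefficients. -/
noncomputable def Lfun (G : Multigraph) (ω : G.D → ℝ) : PowerSeries ℂ :=
  PowerSeries.mk fun l =>
    PowerSeries.coeff l
      (∏ᶠ (q : G.Cyc) (_ : primeQ q ∧ tauQ q ≤ l),
        (1 - PowerSeries.C (chiQ ω q) * (PowerSeries.X : PowerSeries ℂ) ^ tauQ q)⁻¹)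

end Multigraph

namespace Multigraph

variable (G : Multigraph)

/-- The set of integral 1-cycles: `H₁(G,ℤ)`, realized as antisymmetric
integer-valued functions on darts with vanishing boundary at every vertex. -/
def H1set : Set (G.D → ℤ) :=
  {α | (∀ d, α (G.inv d) = - α d) ∧
    ∀ v : G.V, ∑ d ∈ Finset.univ.filter (fun d : G.D => G.head d = v), α d = 0}

/-- The pairing `ω(α)` between a 1-form `ω` and an integral 1-chain `α`. -/
noncomputable def pairingZ (ω : G.D → ℝ) (α : G.D → ℤ) : ℝ :=
  (1 / 2) * ∑ d : G.D, ω d * (α d : ℝ)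

end Multigraph

/-!
`L(u, χ_ω) = z(u)` forces `χ_ω(C) = 1` by induction on the length `m` of `C`: if `χ_ω = 1` on
shorter circuits, the coefficients of `u^m` in the two Euler products differ by
`∑ (χ_ω(P) - 1)` over the prime cycles `[P]` of length `m`, and since `|χ_ω(P)| = 1` this sum
vanishes only if every `χ_ω(P) = 1`; a circuit that is not prime is a power of a shorter one.

For the second equivalence, `χ_ω(C)` is the character evaluated at `C^{ab} ∈ H₁(G, ℤ)`, and
conversely every integral 1-cycle is a ℤ-combination of such `C^{ab}`: following darts on which a
nonzero 1-cycle is positive eventually closes up into a circuit, and subtracting its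
abelianization lowers the ℓ¹-norm of the 1-cycle.
-/

lemma Fintype.sum_count_mul_eq_sum_map {α R : Type*} [Fintype α] [DecidableEq α]
    [NonAssocSemiring R] (l : List α) (f : α → R) : ∑ a, (l.count a : R) * f a = (l.map f).sum := by
  rw [Finset.sum_list_map_count]
  refine (Finset.sum_subset (Finset.subset_univ _) fun a _ ha => ?_).symm.trans
    (Finset.sum_congr rfl fun a _ => (nsmul_eq_mul _ _).symm)
  rw [List.count_eq_zero_of_not_mem (by simpa using ha), Nat.cast_zero, zero_mul]

lemma Function.exists_mem_periodicPts {α : Type*} [Finite α] (f : α → α) (x : α) :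
    ∃ y, y ∈ Function.periodicPts f := by
  obtain ⟨a, b, hab, h⟩ := Finite.exists_ne_map_eq_of_infinite fun n => f^[n] x
  wlog hlt : a < b generalizing a b
  · exact this b a hab.symm h.symm (by omega)
  refine ⟨f^[a] x, Function.mk_mem_periodicPts (n := b - a) (by omega) ?_⟩
  rw [Function.IsPeriodicPt, Function.IsFixedPt, ← Function.iterate_add_apply,
    Nat.sub_add_cancel hlt.le]
  exact h.symm

lemma Complex.eq_one_of_norm_le_one_of_sum_sub_one_eq_zero {ι : Type*} {s : Finset ι}
    {z : ι → ℂ} (hz : ∀ i ∈ s, ‖z i‖ ≤ 1) (h : ∑ i ∈ s, (z i - 1) = 0) : ∀ i ∈ s, z i = 1 := by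
  have hre_le : ∀ i ∈ s, (z i).re ≤ 1 := fun i hi => (Complex.re_le_norm _).trans (hz i hi)
  have hre : ∀ i ∈ s, 1 - (z i).re = 0 := by
    refine (Finset.sum_eq_zero_iff_of_nonneg fun i hi => sub_nonneg.mpr (hre_le i hi)).mp ?_
    have := congrArg Complex.re h
    simp only [Complex.re_sum, Complex.sub_re, Complex.one_re, Complex.zero_re] at this
    rw [Finset.sum_sub_distrib] at this ⊢
    linarith
  intro i hi
  have h1 : (z i).re = 1 := by linarith [hre i hi]
  have him : (z i).im = 0 := by
    have := Complex.sq_norm (z i)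
    rw [Complex.normSq_apply] at this
    nlinarith [hz i hi, norm_nonneg (z i)]
  exact Complex.ext h1 him

section PowerSeries

open PowerSeries

lemma PowerSeries.coeff_mul_of_X_pow_dvd_sub_one {R : Type*} [CommRing R] {A B : R⟦X⟧} {m : ℕ}
    (h : X ^ m ∣ B - 1) :
    coeff m (A * B) = coeff m A + constantCoeff A * coeff m (B - 1) := by
  obtain ⟨Q, hQ⟩ := h
  rw [show A * B = A + X ^ m * (A * Q) by rw [← sub_add_cancel B 1, hQ]; ring, hQ]
  simp only [map_add, coeff_X_pow_mul', le_refl, if_true, Nat.sub_self,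
    coeff_zero_eq_constantCoeff, map_mul]

variable {K : Type*} [Field K]

lemma PowerSeries.constantCoeff_inv_one_sub_C_mul_X_pow (c : K) {n : ℕ} (hn : 0 < n) :
    constantCoeff (1 - C c * X ^ n)⁻¹ = 1 := by
  simp [constantCoeff_inv, zero_pow hn.ne']

lemma PowerSeries.X_pow_dvd_inv_one_sub_C_mul_X_pow_sub_one (c : K) {n : ℕ} (hn : 0 < n) :
    X ^ n ∣ (1 - C c * X ^ n)⁻¹ - 1 ∧ coeff n ((1 - C c * X ^ n)⁻¹ - 1) = c := by
  have hinv : (1 - C c * X ^ n)⁻¹ * (1 - C c * X ^ n) = 1 :=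
    PowerSeries.inv_mul_cancel _ (by simp [zero_pow hn.ne'])
  have hsub : (1 - C c * X ^ n)⁻¹ - 1 = X ^ n * (C c * (1 - C c * X ^ n)⁻¹) := by
    linear_combination hinv
  refine ⟨hsub ▸ dvd_mul_right _ _, ?_⟩
  rw [hsub, coeff_X_pow_mul', if_pos le_rfl, Nat.sub_self, coeff_zero_eq_constantCoeff, map_mul,
    constantCoeff_inv_one_sub_C_mul_X_pow c hn, constantCoeff_C, mul_one]

lemma PowerSeries.X_pow_dvd_prod_inv_one_sub_C_mul_X_pow_sub_one {ι : Type*} (s : Finset ι)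
    (c : ι → K) {m : ℕ} (hm : 0 < m) :
    X ^ m ∣ (∏ i ∈ s, (1 - C (c i) * X ^ m)⁻¹) - 1 ∧
      coeff m ((∏ i ∈ s, (1 - C (c i) * X ^ m)⁻¹) - 1) = ∑ i ∈ s, c i := by
  classical
  induction s using Finset.induction with
  | empty => simp
  | insert a s ha ih =>
    obtain ⟨hdvd_a, hcoeff_a⟩ := X_pow_dvd_inv_one_sub_C_mul_X_pow_sub_one (c a) hm
    rw [Finset.prod_insert ha, Finset.sum_insert ha]
    refine ⟨?_, ?_⟩
    · rw [show ∀ x y : K⟦X⟧, x * y - 1 = x * (y - 1) + (x - 1) by intros; ring]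
      exact dvd_add (dvd_mul_of_dvd_right ih.1 _) hdvd_a
    · rw [map_sub, coeff_mul_of_X_pow_dvd_sub_one ih.1,
        constantCoeff_inv_one_sub_C_mul_X_pow _ hm, one_mul, ih.2]
      rw [map_sub] at hcoeff_a
      linear_combination hcoeff_a

lemma PowerSeries.coeff_prod_inv_one_sub_C_mul_X_pow_sub {ι : Type*} (s : Finset ι) (n : ι → ℕ)
    (c c' : ι → K) {m : ℕ} (hn : ∀ i ∈ s, 0 < n i ∧ n i ≤ m)
    (hc : ∀ i ∈ s, n i < m → c i = c' i) :
    coeff m (∏ i ∈ s, (1 - C (c i) * X ^ n i)⁻¹) - coeff m (∏ i ∈ s, (1 - C (c' i) * X ^ n i)⁻¹)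
      = ∑ i ∈ s with n i = m, (c i - c' i) := by
  classical
  rcases Nat.eq_zero_or_pos m with rfl | hm
  · obtain rfl : s = ∅ := Finset.eq_empty_of_forall_notMem fun i hi => by have := hn i hi; omega
    simp
  have hlow : ∏ i ∈ s with ¬n i = m, (1 - C (c i) * X ^ n i)⁻¹
      = ∏ i ∈ s with ¬n i = m, (1 - C (c' i) * X ^ n i)⁻¹ := by
    refine Finset.prod_congr rfl fun i hi => ?_
    obtain ⟨hi, hne⟩ := Finset.mem_filter.mp hi
    rw [hc i hi (lt_of_le_of_ne (hn i hi).2 hne)]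
  have htop : ∀ c : ι → K, ∏ i ∈ s with n i = m, (1 - C (c i) * X ^ n i)⁻¹
      = ∏ i ∈ s with n i = m, (1 - C (c i) * X ^ m)⁻¹ :=
    fun c => Finset.prod_congr rfl fun i hi => by rw [(Finset.mem_filter.mp hi).2]
  have hconst : constantCoeff (∏ i ∈ s with ¬n i = m, (1 - C (c' i) * X ^ n i)⁻¹) = 1 := by
    rw [map_prod]
    exact Finset.prod_eq_one fun i hi =>
      constantCoeff_inv_one_sub_C_mul_X_pow _ (hn i (Finset.mem_filter.mp hi).1).1
  obtain ⟨hdvd, hcoeff⟩ := X_pow_dvd_prod_inv_one_sub_C_mul_X_pow_sub_one (s.filter (n · = m)) c hm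
  obtain ⟨hdvd', hcoeff'⟩ :=
    X_pow_dvd_prod_inv_one_sub_C_mul_X_pow_sub_one (s.filter (n · = m)) c' hm
  rw [← Finset.prod_filter_not_mul_prod_filter s (n · = m),
    ← Finset.prod_filter_not_mul_prod_filter s (n · = m), hlow, htop, htop,
    coeff_mul_of_X_pow_dvd_sub_one hdvd, coeff_mul_of_X_pow_dvd_sub_one hdvd',
    hconst, hcoeff, hcoeff', Finset.sum_sub_distrib]
  ring

end PowerSeries

namespace Multigraph

variable {G : Multigraph}

lemma Circuit.darts_injective : Function.Injective (Circuit.darts (G := G)) := by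
  rintro ⟨_, _, _, _, _⟩ ⟨_, _, _, _, _⟩ rfl
  rfl

lemma Circuit.len_pos (C : G.Circuit) : 0 < C.len :=
  List.length_pos_iff.mpr C.ne

lemma norm_chiC (ω : G.D → ℝ) (C : G.Circuit) : ‖chiC G ω C‖ = 1 := by
  rw [chiC, show 2 * Real.pi * Complex.I * ((C.darts.map ω).sum : ℝ)
    = ((2 * Real.pi * (C.darts.map ω).sum : ℝ) : ℂ) * Complex.I by push_cast; ring]
  exact Complex.norm_exp_ofReal_mul_I _

lemma chiC_zero (C : G.Circuit) : chiC G 0 C = 1 := by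
  simp [chiC, Pi.zero_def]

def invPerm (G : Multigraph) : Equiv.Perm G.D := ⟨G.inv, G.inv, G.inv_inv, G.inv_inv⟩

/-- The abelianization `C^{ab}` of a walk. -/
def chainOf (l : List G.D) : G.D → ℤ := fun d => l.count d - l.count (G.inv d)

lemma sum_mul_chainOf {R : Type*} [CommRing R] (f : G.D → R) (l : List G.D) :
    ∑ d, f d * chainOf l d = ∑ d, (l.count d : R) * (f d - f (G.inv d)) := by
  have hinv : ∑ d, f d * (l.count (G.inv d) : R) = ∑ d, (l.count d : R) * f (G.inv d) :=
    Fintype.sum_equiv G.invPerm _ _ fun d => by simp [invPerm, G.inv_inv, mul_comm]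
  simp only [chainOf, Int.cast_sub, Int.cast_natCast, mul_sub, Finset.sum_sub_distrib, hinv]
  simp only [mul_comm]

lemma pairingZ_chainOf {ω : G.D → ℝ} (hω : G.IsOneForm ω) (l : List G.D) :
    G.pairingZ ω (chainOf l) = (l.map ω).sum := by
  have h2 : ∀ d, (l.count d : ℝ) * (ω d - ω (G.inv d)) = 2 * ((l.count d : ℝ) * ω d) := by
    intro d
    rw [hω]
    ring
  simp only [pairingZ, sum_mul_chainOf, h2, ← Finset.mul_sum, Fintype.sum_count_mul_eq_sum_map]
  ring

lemma map_tail_tail_eq_dropLast_map_head {l : List G.D}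
    (hl : l.IsChain fun a b => G.tail b = G.head a ∧ b ≠ G.inv a) :
    l.tail.map G.tail = (l.map G.head).dropLast := by
  induction l with
  | nil => rfl
  | cons a l ih =>
    cases l with
    | nil => rfl
    | cons b l =>
      rw [List.isChain_cons_cons] at hl
      have ih := ih hl.2
      simp only [List.tail_cons, List.map_cons] at ih ⊢
      rw [List.dropLast_cons_of_ne_nil (by simp), ← ih, hl.1.1]

lemma Circuit.map_tail_perm_map_head (C : G.Circuit) :
    (C.darts.map G.tail).Perm (C.darts.map G.head) := by
  have hne : C.darts.map G.head ≠ [] := by simp [C.ne]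
  have htails : C.darts.map G.tail
      = (C.darts.map G.head).getLast hne :: (C.darts.map G.head).dropLast := by
    conv_lhs => rw [← List.cons_head_tail C.ne]
    rw [List.map_cons, map_tail_tail_eq_dropLast_map_head C.chain, List.getLast_map, C.closed]
  rw [htails]
  exact (List.perm_append_singleton _ _).symm.trans (by rw [List.dropLast_append_getLast hne])

lemma chainOf_mem_H1set (C : G.Circuit) : chainOf C.darts ∈ G.H1set := by
  refine ⟨fun d => by simp only [chainOf, G.inv_inv]; ring, fun v => ?_⟩
  let δ : G.V → ℤ := fun w => if w = v then 1 else 0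
  calc ∑ d ∈ Finset.univ.filter (fun d => G.head d = v), chainOf C.darts d
      = ∑ d, (δ ∘ G.head) d * Int.cast (chainOf C.darts d) := by
        simp only [Finset.sum_filter, Function.comp_apply, δ, ite_mul, one_mul, zero_mul,
          Int.cast_id]
    _ = (C.darts.map (δ ∘ G.head)).sum - (C.darts.map (δ ∘ G.tail)).sum := by
        rw [sum_mul_chainOf, ← Fintype.sum_count_mul_eq_sum_map,
          ← Fintype.sum_count_mul_eq_sum_map, ← Finset.sum_sub_distrib]
        simp only [mul_sub]
        rfl
    _ = 0 := by
        rw [sub_eq_zero, ← List.map_map, ← List.map_map]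
        exact (C.map_tail_perm_map_head.map δ).sum_eq.symm

def Circuit.ofPeriodic (g : ℕ → G.D) {n : ℕ} (hn : 0 < n) (hper : g n = g 0)
    (hstep : ∀ i, G.tail (g (i + 1)) = G.head (g i) ∧ g (i + 1) ≠ G.inv (g i)) :
    G.Circuit where
  darts := (List.range n).map g
  ne := by simpa using hn.ne'
  chain := by
    show List.IsChain _ _
    rw [List.isChain_map, List.isChain_range]
    exact fun i _ => hstep i
  closed := by
    simpa [← hper, Nat.sub_add_cancel hn] using (hstep (n - 1)).1
  notail := by
    simpa [← hper, Nat.sub_add_cancel hn] using (hstep (n - 1)).2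

lemma exists_circuit_nodup_of_forall_exists_next {p : G.D → Prop}
    (hinv : ∀ d, p d → ¬ p (G.inv d)) (hnext : ∀ d, p d → ∃ d', p d' ∧ G.tail d' = G.head d)
    {d₀ : G.D} (hd₀ : p d₀) : ∃ C : G.Circuit, C.darts.Nodup ∧ ∀ d ∈ C.darts, p d := by
  choose next hnext_p hnext_tail using hnext
  let f : {d // p d} → {d // p d} := fun d => ⟨next d d.2, hnext_p d d.2⟩
  obtain ⟨y, hy⟩ := Function.exists_mem_periodicPts f ⟨d₀, hd₀⟩
  let g : ℕ → G.D := fun i => (f^[i] y).1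
  have hg : ∀ i, g (i + 1) = next (g i) (f^[i] y).2 := fun i =>
    congrArg Subtype.val (Function.iterate_succ_apply' f i y)
  have hstep : ∀ i, G.tail (g (i + 1)) = G.head (g i) ∧ g (i + 1) ≠ G.inv (g i) := fun i =>
    ⟨by rw [hg]; exact hnext_tail _ _,
     fun h => hinv _ (f^[i] y).2 (h ▸ (f^[i + 1] y).2)⟩
  have hper : g (Function.minimalPeriod f y) = g 0 := by
    simp only [g, Function.iterate_minimalPeriod, Function.iterate_zero_apply]
  refine ⟨Circuit.ofPeriodic g (Function.minimalPeriod_pos_of_mem_periodicPts hy) hper hstep,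
    ?_, ?_⟩
  · refine (List.nodup_range).map_on fun i hi j hj hij => ?_
    exact Function.iterate_injOn_Iio_minimalPeriod (List.mem_range.mp hi) (List.mem_range.mp hj)
      (Subtype.ext hij)
  · simp only [Circuit.ofPeriodic, List.mem_map]
    rintro _ ⟨i, -, rfl⟩
    exact (f^[i] y).2

lemma sub_mem_H1set {α β : G.D → ℤ} (hα : α ∈ G.H1set) (hβ : β ∈ G.H1set) :
    α - β ∈ G.H1set := by
  refine ⟨fun d => ?_, fun v => ?_⟩
  · simp only [Pi.sub_apply, hα.1 d, hβ.1 d]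
    ring
  · simp only [Pi.sub_apply, Finset.sum_sub_distrib, hα.2 v, hβ.2 v, sub_zero]

lemma pairingZ_add (ω : G.D → ℝ) (α β : G.D → ℤ) :
    G.pairingZ ω (α + β) = G.pairingZ ω α + G.pairingZ ω β := by
  simp only [pairingZ, Pi.add_apply, Int.cast_add, mul_add, Finset.sum_add_distrib]

lemma pairingZ_neg (ω : G.D → ℝ) (α : G.D → ℤ) : G.pairingZ ω (-α) = -G.pairingZ ω α := by
  simp only [pairingZ, Pi.neg_apply, Int.cast_neg, mul_neg, Finset.sum_neg_distrib]

lemma exists_pos_tail_eq_head {α : G.D → ℤ} (hα : α ∈ G.H1set) {d : G.D} (hd : 0 < α d) :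
    ∃ d', 0 < α d' ∧ G.tail d' = G.head d := by
  obtain ⟨e, he, hneg⟩ : ∃ e ∈ Finset.univ.filter (fun e => G.head e = G.head d), α e < 0 := by
    by_contra! hnonneg
    have := (Finset.sum_eq_zero_iff_of_nonneg hnonneg).mp (hα.2 (G.head d)) d (by simp)
    omega
  refine ⟨G.inv e, by rw [hα.1]; omega, ?_⟩
  rw [tail, G.inv_inv]
  exact (Finset.mem_filter.mp he).2

lemma sum_natAbs_sub_chainOf_lt {α : G.D → ℤ} (hα : ∀ d, α (G.inv d) = -α d) {C : G.Circuit}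
    (hnodup : C.darts.Nodup) (hpos : ∀ d ∈ C.darts, 0 < α d) :
    ∑ d, (α d - chainOf C.darts d).natAbs < ∑ d, (α d).natAbs := by
  have hle : ∀ d, C.darts.count d ≤ 1 := List.nodup_iff_count_le_one.mp hnodup
  have hcount : ∀ d, 0 < C.darts.count d → 0 < α d :=
    fun d h => hpos d (List.count_pos_iff.mp h)
  have key : ∀ d, (α d - chainOf C.darts d).natAbs ≤ (α d).natAbs ∧
      (0 < C.darts.count d → (α d - chainOf C.darts d).natAbs < (α d).natAbs) := by
    intro d
    have h₁ := hle d
    have h₂ := hle (G.inv d)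
    have h₃ := hcount d
    have h₄ := hcount (G.inv d)
    rw [hα] at h₄
    simp only [chainOf]
    omega
  refine Finset.sum_lt_sum (fun d _ => (key d).1)
    ⟨_, Finset.mem_univ _, (key _).2 (List.count_pos_iff.mpr (List.head_mem C.ne))⟩

lemma mem_closure_range_chainOf {α : G.D → ℤ} (hα : α ∈ G.H1set) :
    α ∈ AddSubgroup.closure (Set.range fun C : G.Circuit => chainOf C.darts) := by
  induction hN : ∑ d, (α d).natAbs using Nat.strong_induction_on generalizing α with
  | _ N ih =>
  by_cases h0 : α = 0
  · exact h0 ▸ zero_mem _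
  obtain ⟨d₀, hd₀⟩ : ∃ d, 0 < α d := by
    obtain ⟨d, hd⟩ := Function.ne_iff.mp h0
    rcases (Ne.lt_or_gt hd : α d < 0 ∨ 0 < α d) with hneg | hpos
    · exact ⟨G.inv d, by rw [hα.1]; omega⟩
    · exact ⟨d, hpos⟩
  obtain ⟨C, hnodup, hpos⟩ := exists_circuit_nodup_of_forall_exists_next
    (p := fun d => 0 < α d) (fun d hd h => by rw [hα.1] at h; omega)
    (fun d hd => exists_pos_tail_eq_head hα hd) hd₀
  rw [← sub_add_cancel α (chainOf C.darts)]
  exact add_mem (ih _ (hN ▸ sum_natAbs_sub_chainOf_lt hα.1 hnodup hpos)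
    (sub_mem_H1set hα (chainOf_mem_H1set C)) rfl) (AddSubgroup.subset_closure ⟨C, rfl⟩)

lemma exp_pairingZ_eq_one_of_mem_closure {ω : G.D → ℝ} (hω : G.IsOneForm ω)
    (hchi : ∀ C : G.Circuit, chiC G ω C = 1) {α : G.D → ℤ}
    (hα : α ∈ AddSubgroup.closure (Set.range fun C : G.Circuit => chainOf C.darts)) :
    Complex.exp (2 * Real.pi * Complex.I * (G.pairingZ ω α : ℝ)) = 1 := by
  induction hα using AddSubgroup.closure_induction with
  | mem _ h =>
    obtain ⟨C, rfl⟩ := h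
    rw [pairingZ_chainOf hω]
    exact hchi C
  | zero => simp [pairingZ]
  | add α β _ _ hα hβ =>
    rw [pairingZ_add, Complex.ofReal_add, mul_add, Complex.exp_add, hα, hβ, one_mul]
  | neg α _ hα => rw [pairingZ_neg, Complex.ofReal_neg, mul_neg, Complex.exp_neg, hα, inv_one]

lemma forall_H1set_exp_pairingZ_eq_one_iff {ω : G.D → ℝ} (hω : G.IsOneForm ω) :
    (∀ α ∈ G.H1set, Complex.exp (2 * Real.pi * Complex.I * (G.pairingZ ω α : ℝ)) = 1) ↔
      ∀ C : G.Circuit, chiC G ω C = 1 :=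
  ⟨fun h C => by rw [chiC, ← pairingZ_chainOf hω]; exact h _ (chainOf_mem_H1set C),
    fun h _ hα => exp_pairingZ_eq_one_of_mem_closure hω h (mem_closure_range_chainOf hα)⟩

def Circuit.cyc (C : G.Circuit) : G.Cyc := Quot.mk rotRel C

lemma Circuit.apply_cyc_out {β : Type*} (f : G.Circuit → β)
    (hf : ∀ C C', rotRel C C' → f C = f C') (C : G.Circuit) : f C.cyc.out = f C :=
  congrArg (Quot.lift f hf) (Quot.out_eq _)

lemma tauQ_cyc (C : G.Circuit) : tauQ C.cyc = C.len :=
  C.apply_cyc_out Circuit.len (fun _ _ ⟨n, h⟩ => by simp [Circuit.len, h])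

lemma chiQ_cyc (ω : G.D → ℝ) (C : G.Circuit) : chiQ ω C.cyc = chiC G ω C :=
  C.apply_cyc_out (chiC G ω)
    (fun C _ ⟨n, h⟩ => by rw [chiC, chiC, h, ((C.darts.rotate_perm n).map ω).sum_eq])

lemma finite_setOf_primeQ_tauQ_le (m : ℕ) : {q : G.Cyc | primeQ q ∧ tauQ q ≤ m}.Finite := by
  have hinj : Function.Injective fun q : G.Cyc => q.out.darts := fun q q' h => by
    rw [← Quot.out_eq q, ← Quot.out_eq q']
    exact congrArg _ (Circuit.darts_injective h)
  exact ((List.finite_length_le G.D m).preimage hinj.injOn).subset fun _ hq => hq.2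

lemma coeff_Lfun (ω : G.D → ℝ) (m : ℕ) :
    PowerSeries.coeff m (G.Lfun ω) = PowerSeries.coeff m
      (∏ q ∈ (finite_setOf_primeQ_tauQ_le m).toFinset,
        (1 - PowerSeries.C (chiQ ω q) * PowerSeries.X ^ tauQ q)⁻¹) := by
  rw [Lfun, PowerSeries.coeff_mk]
  exact congrArg _ (finprod_mem_eq_finite_toFinset_prod _ _)

lemma coeff_Lfun_sub_coeff_Lfun_zero {ω : G.D → ℝ} {m : ℕ}
    (hsmall : ∀ q : G.Cyc, primeQ q → tauQ q < m → chiQ ω q = 1) :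
    PowerSeries.coeff m (G.Lfun ω) - PowerSeries.coeff m (G.Lfun 0)
      = ∑ q ∈ (finite_setOf_primeQ_tauQ_le m).toFinset with tauQ q = m, (chiQ ω q - 1) := by
  have hchi0 : ∀ q : G.Cyc, chiQ 0 q = 1 := fun q => chiC_zero q.out
  rw [coeff_Lfun, coeff_Lfun, PowerSeries.coeff_prod_inv_one_sub_C_mul_X_pow_sub]
  · simp only [hchi0]
  · exact fun q hq => ⟨q.out.len_pos, ((Set.Finite.mem_toFinset _).mp hq).2⟩
  · intro q hq hlt
    rw [hsmall q ((Set.Finite.mem_toFinset _).mp hq).1 hlt, hchi0]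

lemma Circuit.exists_eq_flatten_replicate_of_not_isPrime {C : G.Circuit} (hC : ¬C.IsPrime) :
    ∃ (C' : G.Circuit) (k : ℕ), 2 ≤ k ∧ C.darts = (List.replicate k C'.darts).flatten := by
  obtain ⟨l, k, hk, hdarts⟩ := not_not.mp hC
  obtain ⟨k, rfl⟩ : ∃ k', k = k' + 2 := ⟨k - 2, by omega⟩
  have hl : l ≠ [] := by
    rintro rfl
    exact C.ne (by simp [hdarts])
  have hchain : List.IsChain _ _ := C.chain
  rw [hdarts, List.replicate_succ, List.flatten_cons] at hchain
  obtain ⟨hchain_l, -, hjoin⟩ := List.isChain_append.mp hchain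
  -- the junction between the first two copies of `l` closes up `l` itself
  have hclose := hjoin (l.getLast hl) (by simp [List.getLast?_eq_some_getLast hl])
    (l.head hl) (by simp [List.replicate_succ, List.head?_eq_some_head hl])
  exact ⟨⟨l, hl, hchain_l, hclose.1, hclose.2⟩, k + 2, hk, hdarts⟩

lemma Circuit.len_eq_mul_of_eq_flatten_replicate {C C' : G.Circuit} {k : ℕ}
    (h : C.darts = (List.replicate k C'.darts).flatten) : C.len = k * C'.len := by
  rw [Circuit.len, h, List.length_flatten, List.map_replicate, List.sum_replicate, smul_eq_mul,
    Circuit.len]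

lemma chiC_eq_pow_of_eq_flatten_replicate (ω : G.D → ℝ) {C C' : G.Circuit} {k : ℕ}
    (h : C.darts = (List.replicate k C'.darts).flatten) : chiC G ω C = chiC G ω C' ^ k := by
  rw [chiC, chiC, ← Complex.exp_nat_mul, h, List.map_flatten, List.map_replicate,
    List.sum_flatten, List.map_replicate, List.sum_replicate, nsmul_eq_mul]
  push_cast
  ring_nf

lemma Lfun_eq_of_chiC_eq_one {ω : G.D → ℝ} (hchi : ∀ C : G.Circuit, chiC G ω C = 1) :
    G.Lfun ω = G.Lfun 0 := by
  have : chiQ (G := G) ω = chiQ 0 := funext fun q => (hchi q.out).trans (chiC_zero q.out).symm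
  rw [Lfun, Lfun, this]

lemma chiC_eq_one_of_Lfun_eq {ω : G.D → ℝ} (hL : G.Lfun ω = G.Lfun 0) (C : G.Circuit) :
    chiC G ω C = 1 := by
  induction hm : C.len using Nat.strong_induction_on generalizing C with
  | _ m ih =>
  have hsmall : ∀ q : G.Cyc, primeQ q → tauQ q < m → chiQ ω q = 1 :=
    fun q _ hq => ih _ hq q.out rfl
  have hprime : ∀ q : G.Cyc, primeQ q → tauQ q = m → chiQ ω q = 1 := by
    have hsum := coeff_Lfun_sub_coeff_Lfun_zero hsmall
    rw [hL, sub_self, eq_comm] at hsum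
    refine fun q hq hτ => Complex.eq_one_of_norm_le_one_of_sum_sub_one_eq_zero
      (fun q _ => (norm_chiC ω q.out).le) hsum q ?_
    simp [hq, hτ]
  rw [← chiQ_cyc]
  by_cases hq : primeQ C.cyc
  · exact hprime _ hq (by rw [tauQ_cyc, hm])
  · obtain ⟨C', k, hk, hC'⟩ := Circuit.exists_eq_flatten_replicate_of_not_isPrime hq
    have hlen : k * C'.len = m := by
      rw [← Circuit.len_eq_mul_of_eq_flatten_replicate hC', ← hm]
      exact tauQ_cyc C
    have hlt : C'.len < m := by nlinarith [C'.len_pos]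
    rw [chiQ, chiC_eq_pow_of_eq_flatten_replicate ω hC', ih _ hlt C' rfl, one_pow]

end Multigraph

open Multigraph

theorem Lfunction_eq_zeta_iff_general (G : Multigraph)
    (ω : G.D → ℝ) (hω : G.IsOneForm ω) :
    (G.Lfun ω = G.Lfun 0 ↔ ∀ C : G.Circuit, chiC G ω C = 1) ∧
    (G.Lfun ω = G.Lfun 0 ↔
      ∀ α ∈ G.H1set, Complex.exp (2 * Real.pi * Complex.I * (G.pairingZ ω α : ℝ)) = 1) := by
  have hL : G.Lfun ω = G.Lfun 0 ↔ ∀ C : G.Circuit, chiC G ω C = 1 :=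
    ⟨chiC_eq_one_of_Lfun_eq, Lfun_eq_of_chiC_eq_one⟩
  exact ⟨hL, hL.trans (forall_H1set_exp_pairingZ_eq_one_iff hω).symm⟩

/-- `L(u,χ_ω)` equals the Ihara zeta function `z(u) = L(u,χ_0)` if
and only if `χ_ω(C) = 1` for every circuit `C`, if and only if the character `χ_ω`
is trivial on `H₁(G,ℤ)`. -/
theorem Lfunction_eq_zeta_iff (G : Multigraph) (hG : G.Connected)
    (ω : G.D → ℝ) (hω : G.IsOneForm ω) :
    (G.Lfun ω = G.Lfun 0 ↔ ∀ C : G.Circuit, chiC G ω C = 1) ∧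
    (G.Lfun ω = G.Lfun 0 ↔
      ∀ α ∈ G.H1set, Complex.exp (2 * Real.pi * Complex.I * (G.pairingZ ω α : ℝ)) = 1) :=
  Lfunction_eq_zeta_iff_general G ω hω
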